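/- (Single-letter two-pair converse bound.) Let Q, X₁, X₂, X₃ be finite-valued random variables with X₁, X₂, X₃ mutually conditionally independent given Q. Let X₁₁ = g₁₁(X₁), X₂₁ = g₂₁(X₂), X₃₁ = g₃₁(X₃), X₁₂ = g₁₂(X₁), X₂₂ = g₂₂(X₂), X₃₂ = g₃₂(X₃) for arbitrary functions g_{lk}; let S₁ = h₁(X₂₁,X₃₁) and S₂ = h₂(X₁₂,X₃₂) with h₁, h₂ one-to-one in each argument; and let Y₁ = f₁(X₁₁,S₁), Y₂ = f₂(X₂₂,S₂) with f₁, f₂ one-to-one in each argument. Assume the invertibility conditions H(S₁|Q) = H(X₂₁|Q) + H(X₃₁|Q) and H(S₂|Q) = H(X₁₂|Q) + H(X₃₂|Q), and the strong-interference condition H(X₂₂|Q) ≤ H(X₂₁|Q). Then I(X₁;Y₁|Q) + I(X₂;Y₂|Q) ≤ H(Y₁|X₃₁,Q). -/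

import Mathlib

/-!
Entropy is the expectation of the surprisal `-log p_X(X)` over the sample space. Hence
conditional independence, `p(x,s,q) p(q) = p(x,q) p(s,q)`, becomes a pointwise identity between
surprisals, and data processing a pointwise inequality.

As `f₁` is injective in `S₁` for fixed `X₁` and `X₁ ⊥ S₁ | Q`, we get
`I(X₁;Y₁|Q) = H(Y₁|Q) - H(S₁|Q) = H(Y₁|Q) - H(X₂₁|Q) - H(X₃₁|Q)`. In the same way
`I(X₂;Y₂|Q) = H(Y₂|Q) - H(S₂|Q) ≤ H(X₂₂|Q) ≤ H(X₂₁|Q)`, because `Y₂` is a function of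
`(X₂₂, S₂)` and `X₂₂ ⊥ S₂ | Q`. Adding, the sum is at most
`H(Y₁|Q) - H(X₃₁|Q) ≤ H(Y₁|X₃₁,Q)`.
-/

open scoped Classical
open Finset

/-- A probability mass function on a finite sample space, given as a real-valued
weight function that is nonnegative and sums to one. -/
structure FinPMF (Ω : Type) where
  [fin : Fintype Ω]
  p : Ω → ℝ
  nonneg : ∀ ω, 0 ≤ p ω
  sum_one : ∑ ω, p ω = 1

/-- Probability of an event. -/
noncomputable def prE {Ω : Type} (μ : FinPMF Ω) (E : Ω → Prop) : ℝ :=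
  letI := μ.fin
  ∑ ω, if E ω then μ.p ω else 0

/-- Probability that the random variable `X` takes the value `x`. -/
noncomputable def prX {Ω α : Type} (μ : FinPMF Ω) (X : Ω → α) (x : α) : ℝ :=
  prE μ (fun ω => X ω = x)

/-- Shannon entropy (base 2) of a random variable on a finite probability space. -/
noncomputable def entH {Ω α : Type} (μ : FinPMF Ω) (X : Ω → α) : ℝ :=
  letI := μ.fin;
  -∑ x ∈ Finset.univ.image X, prX μ X x * Real.logb 2 (prX μ X x)

/-- Conditional entropy `H(X | Y)` (base 2). -/
noncomputable def condH {Ω α β : Type} (μ : FinPMF Ω) (X : Ω → α) (Y : Ω → β) : ℝ :=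
  entH μ (fun ω => (X ω, Y ω)) - entH μ Y

/-- Conditional mutual information `I(X ; Y | Q)` (base 2). -/
noncomputable def condMI {Ω α β γ : Type} (μ : FinPMF Ω) (X : Ω → α) (Y : Ω → β)
    (Q : Ω → γ) : ℝ :=
  condH μ X Q + condH μ Y Q - condH μ (fun ω => (X ω, Y ω)) Q

/-- A two-argument function is one-to-one in each argument. -/
def OneToOne {A B C : Type} (f : A → B → C) : Prop :=
  (∀ b, Function.Injective fun a => f a b) ∧ ∀ a, Function.Injective (f a)

/-- Conditional pmf `p_{X|U}(x|u)`. -/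
noncomputable def condP {Ω α γ : Type} (μ : FinPMF Ω) (X : Ω → α) (U : Ω → γ)
    (x : α) (u : γ) : ℝ :=
  prE μ (fun ω => X ω = x ∧ U ω = u) / prX μ U u

/-- Independence of two random variables. -/
def IndepFun {Ω α β : Type} (μ : FinPMF Ω) (X : Ω → α) (S : Ω → β) : Prop :=
  ∀ x s, prE μ (fun ω => X ω = x ∧ S ω = s) = prX μ X x * prX μ S s

/-- Conditional independence of `A` and `B` given `Z`:
for every `z` with `P(Z = z) > 0`, `P(A = a, B = b | Z = z) = P(A = a | Z = z) P(B = b | Z = z)`. -/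
def CondIndepFun {Ω α β γ : Type} (μ : FinPMF Ω) (A : Ω → α) (B : Ω → β) (Z : Ω → γ) : Prop :=
  ∀ a b z, 0 < prX μ Z z →
    prE μ (fun ω => A ω = a ∧ B ω = b ∧ Z ω = z) / prX μ Z z =
      (prE μ (fun ω => A ω = a ∧ Z ω = z) / prX μ Z z) *
        (prE μ (fun ω => B ω = b ∧ Z ω = z) / prX μ Z z)

/-- Mutual conditional independence of `X₁, X₂, X₃` given `Q`: the joint conditional pmf
factors into the product of the conditional marginals. -/
def CondIndepFun3 {Ω α₁ α₂ α₃ γ : Type} (μ : FinPMF Ω)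
    (X₁ : Ω → α₁) (X₂ : Ω → α₂) (X₃ : Ω → α₃) (Q : Ω → γ) : Prop :=
  ∀ x₁ x₂ x₃ q, 0 < prX μ Q q →
    prE μ (fun ω => X₁ ω = x₁ ∧ X₂ ω = x₂ ∧ X₃ ω = x₃ ∧ Q ω = q) / prX μ Q q =
      (prE μ (fun ω => X₁ ω = x₁ ∧ Q ω = q) / prX μ Q q) *
        (prE μ (fun ω => X₂ ω = x₂ ∧ Q ω = q) / prX μ Q q) *
        (prE μ (fun ω => X₃ ω = x₃ ∧ Q ω = q) / prX μ Q q)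

/-- The ε-typical set (sequences whose empirical pmf is within a relative ε of `p`). -/
def Typical {𝒳 : Type} [Fintype 𝒳] (p : 𝒳 → ℝ) (ε : ℝ) (n : ℕ) (xs : Fin n → 𝒳) : Prop :=
  ∀ x : 𝒳, |((Finset.univ.filter fun i => xs i = x).card : ℝ) / n - p x| ≤ ε * p x

/-- The number of codewords `⌈2^{nR}⌉` at rate `R` and blocklength `n`. -/
noncomputable def codeSize (R : ℝ) (n : ℕ) : ℕ := ⌈(2 : ℝ) ^ ((n : ℝ) * R)⌉₊

open Real

section Probability
variable {Ω : Type} (μ : FinPMF Ω)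

theorem prE_congr {E F : Ω → Prop} (h : ∀ ω, E ω ↔ F ω) : prE μ E = prE μ F := by
  simp only [prE, h]

theorem prE_mono {E F : Ω → Prop} (h : ∀ ω, E ω → F ω) : prE μ E ≤ prE μ F := by
  let _ := μ.fin
  refine Finset.sum_le_sum fun ω _ => ?_
  split_ifs with hE hF hF
  exacts [le_rfl, absurd (h ω hE) hF, μ.nonneg ω, le_rfl]

theorem prE_eq_zero_of_forall_not {E : Ω → Prop} (h : ∀ ω, ¬E ω) : prE μ E = 0 := by
  simp [prE, h]

theorem prE_pos {E : Ω → Prop} {ω : Ω} (hE : E ω) (hω : 0 < μ.p ω) : 0 < prE μ E := by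
  let _ := μ.fin
  refine lt_of_lt_of_le (by simpa [hE] using hω) <|
    Finset.single_le_sum (f := fun ω => if E ω then μ.p ω else 0)
      (fun ω _ => by split <;> simp [μ.nonneg]) (mem_univ ω)

theorem prX_pos {α : Type} (X : Ω → α) {ω : Ω} (hω : 0 < μ.p ω) : 0 < prX μ X (X ω) :=
  prE_pos μ rfl hω

theorem prE_eq_sum_image {α : Type} (A : Ω → α) (E : Ω → Prop) :
    prE μ E = letI := μ.fin; ∑ x ∈ univ.image A, prE μ (fun ω => A ω = x ∧ E ω) := by
  let _ := μ.fin
  unfold prE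
  rw [Finset.sum_comm]
  refine Finset.sum_congr rfl fun ω _ => ?_
  rw [Finset.sum_eq_single (A ω) (fun x _ hx => by simp [Ne.symm hx]) (by simp)]
  simp

theorem prE_comp_and {α : Type} (A : Ω → α) (P : α → Prop) (E : Ω → Prop) :
    prE μ (fun ω => P (A ω) ∧ E ω) =
      letI := μ.fin; ∑ x ∈ (univ.image A).filter P, prE μ (fun ω => A ω = x ∧ E ω) := by
  rw [Finset.sum_filter, prE_eq_sum_image μ A]
  refine Finset.sum_congr rfl fun x _ => ?_
  split_ifs with hx
  · exact prE_congr μ fun ω => ⟨fun ⟨hA, _, hE⟩ => ⟨hA, hE⟩, fun ⟨hA, hE⟩ => ⟨hA, hA ▸ hx, hE⟩⟩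
  · exact prE_eq_zero_of_forall_not μ fun ω ⟨hA, hP, _⟩ => hx (hA ▸ hP)

end Probability

namespace FinPMF
variable {Ω : Type} (μ : FinPMF Ω)

noncomputable def expect (F : Ω → ℝ) : ℝ :=
  letI := μ.fin
  ∑ ω, μ.p ω * F ω

variable {μ}

theorem expect_mono {F G : Ω → ℝ} (h : ∀ ω, 0 < μ.p ω → F ω ≤ G ω) :
    μ.expect F ≤ μ.expect G := by
  let _ := μ.fin
  refine Finset.sum_le_sum fun ω _ => ?_
  rcases (μ.nonneg ω).eq_or_lt with h0 | hpos
  · simp [← h0]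
  · exact mul_le_mul_of_nonneg_left (h ω hpos) hpos.le

theorem expect_congr {F G : Ω → ℝ} (h : ∀ ω, 0 < μ.p ω → F ω = G ω) :
    μ.expect F = μ.expect G :=
  le_antisymm (expect_mono fun ω hω => (h ω hω).le) (expect_mono fun ω hω => (h ω hω).ge)

theorem expect_add (F G : Ω → ℝ) : μ.expect (fun ω => F ω + G ω) = μ.expect F + μ.expect G := by
  simp only [expect, mul_add, Finset.sum_add_distrib]

end FinPMF

section Entropy
variable {Ω : Type} (μ : FinPMF Ω)

theorem entH_eq_expect {α : Type} (X : Ω → α) :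
    entH μ X = μ.expect fun ω => -logb 2 (prX μ X (X ω)) := by
  let _ := μ.fin
  simp only [entH, FinPMF.expect, mul_neg, Finset.sum_neg_distrib, neg_inj]
  rw [← Finset.sum_fiberwise_of_maps_to (g := X) (t := univ.image X)
    (fun ω _ => mem_image_of_mem X (mem_univ ω))]
  refine Finset.sum_congr rfl fun x _ => ?_
  have hfiber : prX μ X x = ∑ ω with X ω = x, μ.p ω := by
    rw [Finset.sum_filter]; rfl
  rw [Finset.sum_congr rfl fun ω hω => by rw [(mem_filter.1 hω).2], ← Finset.sum_mul, hfiber]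

theorem entH_comp_le {α β : Type} (X : Ω → α) (f : α → β) :
    entH μ (fun ω => f (X ω)) ≤ entH μ X := by
  rw [entH_eq_expect, entH_eq_expect]
  refine FinPMF.expect_mono fun ω hω => neg_le_neg <|
    logb_le_logb_of_le one_lt_two (prX_pos μ X hω) <| prE_mono μ fun _ => congrArg f

theorem entH_comp_injective {α β : Type} (X : Ω → α) {e : α → β} (he : Function.Injective e) :
    entH μ (fun ω => e (X ω)) = entH μ X := by
  rw [entH_eq_expect, entH_eq_expect]
  exact FinPMF.expect_congr fun ω _ => by rw [prX, prX, prE_congr μ fun _ => he.eq_iff]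

theorem condH_comp_le {α β γ : Type} (X : Ω → α) (f : α → β) (Q : Ω → γ) :
    condH μ (fun ω => f (X ω)) Q ≤ condH μ X Q :=
  sub_le_sub_right (entH_comp_le μ (fun ω => (X ω, Q ω)) (Prod.map f id)) _

theorem condH_comp_injective {α β γ : Type} (X : Ω → α) {e : α → β} (he : Function.Injective e)
    (Q : Ω → γ) : condH μ (fun ω => e (X ω)) Q = condH μ X Q :=
  congrArg (· - entH μ Q)
    (entH_comp_injective μ (fun ω => (X ω, Q ω)) (he.prodMap Function.injective_id))

theorem condH_le_add_condH_prod {α β γ : Type} (Y : Ω → α) (Z : Ω → β) (Q : Ω → γ) :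
    condH μ Y Q ≤ condH μ Z Q + condH μ Y (fun ω => (Z ω, Q ω)) := by
  have := entH_comp_le μ (fun ω => (Y ω, Z ω, Q ω)) (fun p => (p.1, p.2.2))
  simp only [condH]
  linarith

theorem condH_prod_eq_add_of_condIndepFun {α β γ : Type} {X : Ω → α} {S : Ω → β} {Q : Ω → γ}
    (h : CondIndepFun μ X S Q) :
    condH μ (fun ω => (X ω, S ω)) Q = condH μ X Q + condH μ S Q := by
  suffices entH μ (fun ω => ((X ω, S ω), Q ω)) + entH μ Q =
      entH μ (fun ω => (X ω, Q ω)) + entH μ (fun ω => (S ω, Q ω)) by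
    simp only [condH]; linarith
  simp only [entH_eq_expect, ← FinPMF.expect_add]
  refine FinPMF.expect_congr fun ω hω => ?_
  set a := prE μ (fun ω' => X ω' = X ω ∧ S ω' = S ω ∧ Q ω' = Q ω)
  set b := prE μ (fun ω' => X ω' = X ω ∧ Q ω' = Q ω)
  set c := prE μ (fun ω' => S ω' = S ω ∧ Q ω' = Q ω)
  set d := prX μ Q (Q ω)
  have ha : prX μ (fun ω => ((X ω, S ω), Q ω)) ((X ω, S ω), Q ω) = a :=
    prE_congr μ fun _ => by simp only [Prod.mk.injEq, and_assoc]
  have hb : prX μ (fun ω => (X ω, Q ω)) (X ω, Q ω) = b :=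
    prE_congr μ fun _ => Prod.ext_iff
  have hc : prX μ (fun ω => (S ω, Q ω)) (S ω, Q ω) = c :=
    prE_congr μ fun _ => Prod.ext_iff
  have hd : 0 < d := prX_pos μ Q hω
  have hfactor : a * d = b * c := by
    have h' : a / d = b / d * (c / d) := h (X ω) (S ω) (Q ω) hd
    field_simp at h'
    linarith
  have ha0 : 0 < a := prE_pos μ ⟨rfl, rfl, rfl⟩ hω
  have hb0 : 0 < b := prE_pos μ ⟨rfl, rfl⟩ hω
  have hc0 : 0 < c := prE_pos μ ⟨rfl, rfl⟩ hω
  rw [ha, hb, hc, ← neg_add, ← neg_add, ← logb_mul ha0.ne' hd.ne', ← logb_mul hb0.ne' hc0.ne',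
    hfactor]

end Entropy

section CondIndep
variable {Ω : Type} {μ : FinPMF Ω}

theorem CondIndepFun.symm {α β γ : Type} {A : Ω → α} {B : Ω → β} {Z : Ω → γ}
    (h : CondIndepFun μ A B Z) : CondIndepFun μ B A Z := by
  intro b a z hz
  rw [mul_comm, ← h a b z hz, prE_congr μ fun _ => and_left_comm]

theorem CondIndepFun.comp_left {α α' β γ : Type} {A : Ω → α} {B : Ω → β} {Z : Ω → γ}
    (h : CondIndepFun μ A B Z) (φ : α → α') : CondIndepFun μ (fun ω => φ (A ω)) B Z := by
  intro a b z hz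
  rw [prE_comp_and μ A (φ · = a), prE_comp_and μ A (φ · = a), Finset.sum_div, Finset.sum_div,
    Finset.sum_mul]
  exact Finset.sum_congr rfl fun x _ => h x b z hz

theorem CondIndepFun.comp_right {α β β' γ : Type} {A : Ω → α} {B : Ω → β} {Z : Ω → γ}
    (h : CondIndepFun μ A B Z) (ψ : β → β') : CondIndepFun μ A (fun ω => ψ (B ω)) Z :=
  (h.symm.comp_left ψ).symm

variable {α₁ α₂ α₃ γ : Type} {X₁ : Ω → α₁} {X₂ : Ω → α₂} {X₃ : Ω → α₃} {Q : Ω → γ}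

theorem CondIndepFun3.swap (h : CondIndepFun3 μ X₁ X₂ X₃ Q) : CondIndepFun3 μ X₂ X₁ X₃ Q := by
  intro x₂ x₁ x₃ q hq
  rw [prE_congr μ fun _ => and_left_comm, h x₁ x₂ x₃ q hq]
  ring

theorem CondIndepFun3.condIndepFun_prod (h : CondIndepFun3 μ X₁ X₂ X₃ Q) :
    CondIndepFun μ X₁ (fun ω => (X₂ ω, X₃ ω)) Q := by
  let _ := μ.fin
  rintro x₁ ⟨x₂, x₃⟩ q hq
  simp only [Prod.mk.injEq, and_assoc]
  set d := prX μ Q q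
  have hmarginal : prE μ (fun ω => X₂ ω = x₂ ∧ X₃ ω = x₃ ∧ Q ω = q) / d =
      prE μ (fun ω => X₂ ω = x₂ ∧ Q ω = q) / d * (prE μ (fun ω => X₃ ω = x₃ ∧ Q ω = q) / d) := by
    calc _ = ∑ x ∈ univ.image X₁,
          prE μ (fun ω => X₁ ω = x ∧ X₂ ω = x₂ ∧ X₃ ω = x₃ ∧ Q ω = q) / d := by
          rw [prE_eq_sum_image μ X₁, Finset.sum_div]
      _ = ∑ x ∈ univ.image X₁, prE μ (fun ω => X₁ ω = x ∧ Q ω = q) / d *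
          (prE μ (fun ω => X₂ ω = x₂ ∧ Q ω = q) / d * (prE μ (fun ω => X₃ ω = x₃ ∧ Q ω = q) / d)) :=
          Finset.sum_congr rfl fun x _ => by rw [h x x₂ x₃ q hq, mul_assoc]
      _ = d / d * (prE μ (fun ω => X₂ ω = x₂ ∧ Q ω = q) / d *
          (prE μ (fun ω => X₃ ω = x₃ ∧ Q ω = q) / d)) := by
          rw [← Finset.sum_mul, ← Finset.sum_div, ← prE_eq_sum_image μ X₁]; rfl
      _ = _ := by rw [div_self hq.ne', one_mul]
  rw [h x₁ x₂ x₃ q hq, hmarginal, mul_assoc]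

end CondIndep

theorem condMI_eq_condH_sub_of_condIndepFun {Ω α β γ δ : Type} {μ : FinPMF Ω} {X : Ω → α}
    {S : Ω → β} {Q : Ω → γ} (h : CondIndepFun μ X S Q) (f : α → β → δ)
    (hf : ∀ x, Function.Injective (f x)) :
    condMI μ X (fun ω => f (X ω) (S ω)) Q =
      condH μ (fun ω => f (X ω) (S ω)) Q - condH μ S Q := by
  have hinj : Function.Injective fun p : α × β => (p.1, f p.1 p.2) := by
    rintro ⟨x, s⟩ ⟨x', s'⟩ hxs
    simp only [Prod.mk.injEq] at hxs
    obtain ⟨rfl, hs⟩ := hxs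
    rw [hf x hs]
  have hjoint : condH μ (fun ω => (X ω, f (X ω) (S ω))) Q = condH μ (fun ω => (X ω, S ω)) Q :=
    condH_comp_injective μ (fun ω => (X ω, S ω)) hinj Q
  rw [condH_prod_eq_add_of_condIndepFun μ h] at hjoint
  rw [condMI, hjoint]
  ring

theorem two_pair_converse_bound_general
    {Ω 𝒬 𝒳₁ 𝒳₂ 𝒳₃ 𝒳₁₁ 𝒳₂₁ 𝒳₃₁ 𝒳₁₂ 𝒳₂₂ 𝒳₃₂ 𝒮₁ 𝒮₂ 𝒴₁ 𝒴₂ : Type}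
    (μ : FinPMF Ω) (Q : Ω → 𝒬) (X₁ : Ω → 𝒳₁) (X₂ : Ω → 𝒳₂) (X₃ : Ω → 𝒳₃)
    (g₁₁ : 𝒳₁ → 𝒳₁₁) (g₂₁ : 𝒳₂ → 𝒳₂₁) (g₃₁ : 𝒳₃ → 𝒳₃₁)
    (g₁₂ : 𝒳₁ → 𝒳₁₂) (g₂₂ : 𝒳₂ → 𝒳₂₂) (g₃₂ : 𝒳₃ → 𝒳₃₂)
    (h₁ : 𝒳₂₁ → 𝒳₃₁ → 𝒮₁) (h₂ : 𝒳₁₂ → 𝒳₃₂ → 𝒮₂)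
    (f₁ : 𝒳₁₁ → 𝒮₁ → 𝒴₁) (f₂ : 𝒳₂₂ → 𝒮₂ → 𝒴₂)
    (hindep : CondIndepFun3 μ X₁ X₂ X₃ Q)
    (hf₁ : OneToOne f₁) (hf₂ : OneToOne f₂)
    (hinv₁ : condH μ (fun ω => h₁ (g₂₁ (X₂ ω)) (g₃₁ (X₃ ω))) Q =
      condH μ (fun ω => g₂₁ (X₂ ω)) Q + condH μ (fun ω => g₃₁ (X₃ ω)) Q)
    (hstrong : condH μ (fun ω => g₂₂ (X₂ ω)) Q ≤ condH μ (fun ω => g₂₁ (X₂ ω)) Q) :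
    condMI μ X₁ (fun ω => f₁ (g₁₁ (X₁ ω)) (h₁ (g₂₁ (X₂ ω)) (g₃₁ (X₃ ω)))) Q +
      condMI μ X₂ (fun ω => f₂ (g₂₂ (X₂ ω)) (h₂ (g₁₂ (X₁ ω)) (g₃₂ (X₃ ω)))) Q ≤
    condH μ (fun ω => f₁ (g₁₁ (X₁ ω)) (h₁ (g₂₁ (X₂ ω)) (g₃₁ (X₃ ω))))
      (fun ω => (g₃₁ (X₃ ω), Q ω)) := by
  have hci₁ : CondIndepFun μ X₁ (fun ω => h₁ (g₂₁ (X₂ ω)) (g₃₁ (X₃ ω))) Q :=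
    hindep.condIndepFun_prod.comp_right fun p => h₁ (g₂₁ p.1) (g₃₁ p.2)
  have hci₂ : CondIndepFun μ X₂ (fun ω => h₂ (g₁₂ (X₁ ω)) (g₃₂ (X₃ ω))) Q :=
    hindep.swap.condIndepFun_prod.comp_right fun p => h₂ (g₁₂ p.1) (g₃₂ p.2)
  have hI₁ := condMI_eq_condH_sub_of_condIndepFun hci₁ (fun x => f₁ (g₁₁ x)) (hf₁.2 <| g₁₁ ·)
  have hI₂ := condMI_eq_condH_sub_of_condIndepFun hci₂ (fun x => f₂ (g₂₂ x)) (hf₂.2 <| g₂₂ ·)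
  have hY₂ := (condH_comp_le μ (fun ω => (g₂₂ (X₂ ω), h₂ (g₁₂ (X₁ ω)) (g₃₂ (X₃ ω))))
    (fun p => f₂ p.1 p.2) Q).trans_eq (condH_prod_eq_add_of_condIndepFun μ (hci₂.comp_left g₂₂))
  have hY₁ := condH_le_add_condH_prod μ
    (fun ω => f₁ (g₁₁ (X₁ ω)) (h₁ (g₂₁ (X₂ ω)) (g₃₁ (X₃ ω)))) (fun ω => g₃₁ (X₃ ω)) Q
  beta_reduce at hI₁ hI₂ hY₂
  linarith

/-- Single-letter two-pair converse bound. -/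
theorem two_pair_converse_bound
    {Ω 𝒬 𝒳₁ 𝒳₂ 𝒳₃ 𝒳₁₁ 𝒳₂₁ 𝒳₃₁ 𝒳₁₂ 𝒳₂₂ 𝒳₃₂ 𝒮₁ 𝒮₂ 𝒴₁ 𝒴₂ : Type}
    [Fintype 𝒬] [Nonempty 𝒬] [Fintype 𝒳₁] [Nonempty 𝒳₁] [Fintype 𝒳₂] [Nonempty 𝒳₂]
    [Fintype 𝒳₃] [Nonempty 𝒳₃] [Fintype 𝒳₁₁] [Nonempty 𝒳₁₁] [Fintype 𝒳₂₁] [Nonempty 𝒳₂₁]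
    [Fintype 𝒳₃₁] [Nonempty 𝒳₃₁] [Fintype 𝒳₁₂] [Nonempty 𝒳₁₂] [Fintype 𝒳₂₂] [Nonempty 𝒳₂₂]
    [Fintype 𝒳₃₂] [Nonempty 𝒳₃₂] [Fintype 𝒮₁] [Nonempty 𝒮₁] [Fintype 𝒮₂] [Nonempty 𝒮₂]
    [Fintype 𝒴₁] [Nonempty 𝒴₁] [Fintype 𝒴₂] [Nonempty 𝒴₂]
    (μ : FinPMF Ω) (Q : Ω → 𝒬) (X₁ : Ω → 𝒳₁) (X₂ : Ω → 𝒳₂) (X₃ : Ω → 𝒳₃)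
    (g₁₁ : 𝒳₁ → 𝒳₁₁) (g₂₁ : 𝒳₂ → 𝒳₂₁) (g₃₁ : 𝒳₃ → 𝒳₃₁)
    (g₁₂ : 𝒳₁ → 𝒳₁₂) (g₂₂ : 𝒳₂ → 𝒳₂₂) (g₃₂ : 𝒳₃ → 𝒳₃₂)
    (h₁ : 𝒳₂₁ → 𝒳₃₁ → 𝒮₁) (h₂ : 𝒳₁₂ → 𝒳₃₂ → 𝒮₂)
    (f₁ : 𝒳₁₁ → 𝒮₁ → 𝒴₁) (f₂ : 𝒳₂₂ → 𝒮₂ → 𝒴₂)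
    (hindep : CondIndepFun3 μ X₁ X₂ X₃ Q)
    (hh₁ : OneToOne h₁) (hh₂ : OneToOne h₂) (hf₁ : OneToOne f₁) (hf₂ : OneToOne f₂)
    (hinv₁ : condH μ (fun ω => h₁ (g₂₁ (X₂ ω)) (g₃₁ (X₃ ω))) Q =
      condH μ (fun ω => g₂₁ (X₂ ω)) Q + condH μ (fun ω => g₃₁ (X₃ ω)) Q)
    (hinv₂ : condH μ (fun ω => h₂ (g₁₂ (X₁ ω)) (g₃₂ (X₃ ω))) Q =
      condH μ (fun ω => g₁₂ (X₁ ω)) Q + condH μ (fun ω => g₃₂ (X₃ ω)) Q)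
    (hstrong : condH μ (fun ω => g₂₂ (X₂ ω)) Q ≤ condH μ (fun ω => g₂₁ (X₂ ω)) Q) :
    condMI μ X₁ (fun ω => f₁ (g₁₁ (X₁ ω)) (h₁ (g₂₁ (X₂ ω)) (g₃₁ (X₃ ω)))) Q +
      condMI μ X₂ (fun ω => f₂ (g₂₂ (X₂ ω)) (h₂ (g₁₂ (X₁ ω)) (g₃₂ (X₃ ω)))) Q ≤
    condH μ (fun ω => f₁ (g₁₁ (X₁ ω)) (h₁ (g₂₁ (X₂ ω)) (g₃₁ (X₃ ω))))
      (fun ω => (g₃₁ (X₃ ω), Q ω)) :=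
  two_pair_converse_bound_general μ Q X₁ X₂ X₃ g₁₁ g₂₁ g₃₁ g₁₂ g₂₂ g₃₂ h₁ h₂ f₁ f₂ hindep hf₁ hf₂
    hinv₁ hstrong
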